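/- Suppose ‖Q_0‖ ≤ C_max/(1 − β) and the parameter sequence satisfies |θ_n| ≤ 1 for all n, |θ_n| monotonically decreasing to zero, and ∑_{n=1}^{∞} α_n |θ_n| < ∞. Then the iterates of two-step Q-learning are uniformly bounded: there exists a finite constant M, namely M = (C_max/(1 − β))(1 + β|θ_0|) · ∏_{i=1}^{∞} (1 + α_i β² |θ_i|), such that ‖Q_n‖ ≤ M for all n ∈ ℕ. -/

import Mathlib

open Finset Real Filter

variable {S A : Type*}

/-- Maximum norm `‖Q‖ = max_{(i,a)} |Q(i,a)|`. -/
noncomputable def maxNorm [Fintype S] [Fintype A] [Nonempty S] [Nonempty A]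
    (Q : S × A → ℝ) : ℝ :=
  Finset.univ.sup' Finset.univ_nonempty fun x => |Q x|

/-- One two-step Q-learning (TSQL) update: the selected pair `sa` is updated using
rewards `c'`, `c''`, next states `j`, `k`, step size `α` and parameter `θ`;
all other entries stay unchanged. -/
noncomputable def tsqlUpdate [Fintype A] [Nonempty A] [DecidableEq S] [DecidableEq A]
    (β : ℝ) (Q : S × A → ℝ) (sa : S × A) (j k : S) (c' c'' α θ : ℝ) : S × A → ℝ :=
  fun x => if x = sa then
      (1 - α) * Q sa + α * (c' + β * (Finset.univ.sup' Finset.univ_nonempty fun b => Q (j, b))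
        + β * θ * (c'' + β * (Finset.univ.sup' Finset.univ_nonempty fun e => Q (k, e))))
    else Q x

/-! If `‖Q‖ ≤ B` with `(1 + β|θ|) C_max ≤ (1 - β) B`, one update gives
`‖Q'‖ ≤ B (1 + α β² |θ|)`; the first update instead turns `C_max/(1-β)` into
`(C_max/(1-β))(1 + β|θ₀|)`. Since `|θₙ| ≤ |θ₀|` and the partial products are at least one,
the side condition propagates along the bounds
`Bₙ₊₁ = (C_max/(1-β))(1 + β|θ₀|) ∏_{i=1}^{n} (1 + αᵢ β² |θᵢ|)`, and these increase to `M`. -/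

lemma Finset.abs_sup'_le {ι : Type*} {s : Finset ι} (hs : s.Nonempty) {f : ι → ℝ} {c : ℝ}
    (h : ∀ b ∈ s, |f b| ≤ c) : |s.sup' hs f| ≤ c := by
  obtain ⟨b, hb⟩ := hs
  refine abs_le.2 ⟨?_, sup'_le _ _ fun i hi => (abs_le.1 (h i hi)).2⟩
  exact (abs_le.1 (h b hb)).1.trans (le_sup' f hb)

lemma abs_add_mul_le {x y β C B : ℝ} (hβ : 0 ≤ β) (hx : |x| ≤ C) (hy : |y| ≤ B) :
    |x + β * y| ≤ C + β * B :=
  calc |x + β * y| ≤ |x| + β * |y| := by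
        simpa only [abs_mul, abs_of_nonneg hβ] using abs_add_le x (β * y)
    _ ≤ C + β * B := by gcongr

lemma Real.prod_range_one_add_le_tprod {g : ℕ → ℝ} (hg0 : ∀ i, 0 ≤ g i)
    (hg : Summable g) (n : ℕ) : ∏ i ∈ range n, (1 + g i) ≤ ∏' i, (1 + g i) := by
  have hmono : Monotone fun n => ∏ i ∈ range n, (1 + g i) := by
    refine monotone_nat_of_le_succ fun n => ?_
    rw [prod_range_succ]
    exact le_mul_of_one_le_right (prod_nonneg fun i _ => by linarith [hg0 i])
      (le_add_of_nonneg_right (hg0 n))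
  exact hmono.ge_of_tendsto (Real.multipliable_one_add_of_summable hg).hasProd.tendsto_prod_nat n

section maxNorm

variable [Fintype S] [Fintype A] [Nonempty S] [Nonempty A]

lemma abs_le_maxNorm (Q : S × A → ℝ) (x : S × A) : |Q x| ≤ maxNorm Q :=
  le_sup' (fun x => |Q x|) (mem_univ x)

lemma maxNorm_le_iff {Q : S × A → ℝ} {c : ℝ} : maxNorm Q ≤ c ↔ ∀ x, |Q x| ≤ c := by
  simp only [maxNorm, sup'_le_iff, mem_univ, true_implies]

lemma maxNorm_nonneg (Q : S × A → ℝ) : 0 ≤ maxNorm Q :=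
  (abs_nonneg _).trans (abs_le_maxNorm Q (Classical.arbitrary _))

variable [DecidableEq S] [DecidableEq A] {β Cmax B α θ c' c'' : ℝ} {Q : S × A → ℝ}
  {sa : S × A} {j k : S}

lemma maxNorm_tsqlUpdate_le (hβ : 0 ≤ β) (hc' : |c'| ≤ Cmax) (hc'' : |c''| ≤ Cmax)
    (hα0 : 0 ≤ α) (hα1 : α ≤ 1) (hQ : maxNorm Q ≤ B) :
    maxNorm (tsqlUpdate β Q sa j k c' c'' α θ) ≤
      max B ((1 - α) * B + α * ((1 + β * |θ|) * (Cmax + β * B))) := by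
  have hQB : ∀ x, |Q x| ≤ B := maxNorm_le_iff.1 hQ
  refine maxNorm_le_iff.2 fun x => ?_
  unfold tsqlUpdate
  split_ifs
  · refine le_max_of_le_right ?_
    set mj := univ.sup' univ_nonempty fun b => Q (j, b)
    set mk := univ.sup' univ_nonempty fun e => Q (k, e)
    have hmj : |mj| ≤ B := abs_sup'_le _ fun b _ => hQB (j, b)
    have hmk : |mk| ≤ B := abs_sup'_le _ fun e _ => hQB (k, e)
    have hy : |c' + β * mj + β * θ * (c'' + β * mk)| ≤ (1 + β * |θ|) * (Cmax + β * B) :=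
      calc |c' + β * mj + β * θ * (c'' + β * mk)|
          ≤ |c' + β * mj| + β * |θ| * |c'' + β * mk| := by
            simpa only [abs_mul, abs_of_nonneg hβ]
              using abs_add_le (c' + β * mj) (β * θ * (c'' + β * mk))
        _ ≤ (Cmax + β * B) + β * |θ| * (Cmax + β * B) := by
            gcongr <;> exact abs_add_mul_le hβ ‹_› ‹_›
        _ = (1 + β * |θ|) * (Cmax + β * B) := by ring
    calc |(1 - α) * Q sa + α * (c' + β * mj + β * θ * (c'' + β * mk))|
        ≤ (1 - α) * |Q sa| + α * |c' + β * mj + β * θ * (c'' + β * mk)| := by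
          simpa only [abs_mul, abs_of_nonneg hα0, abs_of_nonneg (sub_nonneg.2 hα1)]
            using abs_add_le ((1 - α) * Q sa) (α * (c' + β * mj + β * θ * (c'' + β * mk)))
      _ ≤ (1 - α) * B + α * ((1 + β * |θ|) * (Cmax + β * B)) := by
          gcongr
          exact hQB sa
  · exact le_max_of_le_left (hQB x)

lemma maxNorm_tsqlUpdate_le_mul (hβ : 0 ≤ β) (hc' : |c'| ≤ Cmax) (hc'' : |c''| ≤ Cmax)
    (hα0 : 0 ≤ α) (hα1 : α ≤ 1) (hQ : maxNorm Q ≤ B)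
    (hB : (1 + β * |θ|) * Cmax ≤ (1 - β) * B) :
    maxNorm (tsqlUpdate β Q sa j k c' c'' α θ) ≤ B * (1 + α * β ^ 2 * |θ|) := by
  have hB0 : 0 ≤ B := (maxNorm_nonneg Q).trans hQ
  have hgrowth : 0 ≤ α * β ^ 2 * |θ| := by positivity
  refine (maxNorm_tsqlUpdate_le hβ hc' hc'' hα0 hα1 hQ).trans (max_le ?_ ?_)
  · exact le_mul_of_one_le_right hB0 (le_add_of_nonneg_right hgrowth)
  · nlinarith

lemma maxNorm_tsqlUpdate_le_of_le_div (hβ0 : 0 ≤ β) (hβ1 : β < 1) (hc' : |c'| ≤ Cmax)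
    (hc'' : |c''| ≤ Cmax) (hα0 : 0 ≤ α) (hα1 : α ≤ 1) (hQ : maxNorm Q ≤ Cmax / (1 - β)) :
    maxNorm (tsqlUpdate β Q sa j k c' c'' α θ) ≤ Cmax / (1 - β) * (1 + β * |θ|) := by
  set D := Cmax / (1 - β)
  have hD0 : 0 ≤ D := (maxNorm_nonneg Q).trans hQ
  have hD : Cmax + β * D = D := by
    have : (1 - β) * D = Cmax := mul_div_cancel₀ Cmax (sub_pos.2 hβ1).ne'
    linarith
  have hstep : 0 ≤ β * |θ| := by positivity
  refine (maxNorm_tsqlUpdate_le hβ0 hc' hc'' hα0 hα1 hQ).trans (max_le ?_ ?_)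
  · exact le_mul_of_one_le_right hD0 (le_add_of_nonneg_right hstep)
  · rw [hD]
    nlinarith [mul_nonneg hD0 hstep]

end maxNorm

theorem tsql_iterates_uniformly_bounded_general [Fintype S] [Fintype A] [Nonempty S] [Nonempty A]
    [DecidableEq S] [DecidableEq A]
    (β Cmax : ℝ) (hβ0 : 0 ≤ β) (hβ1 : β < 1) (hC : 0 ≤ Cmax)
    (Q : ℕ → S × A → ℝ) (sa : ℕ → S × A) (j k : ℕ → S) (c' c'' α θ : ℕ → ℝ)
    (hc' : ∀ n, |c' n| ≤ Cmax) (hc'' : ∀ n, |c'' n| ≤ Cmax)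
    (hα0 : ∀ n, 0 ≤ α n) (hα1 : ∀ n, α n ≤ 1)
    (hθmono : Antitone fun n => |θ n|)
    (hsum : Summable fun n => α n * |θ n|)
    (hupd : ∀ n, Q (n + 1) =
      tsqlUpdate β (Q n) (sa n) (j n) (k n) (c' n) (c'' n) (α n) (θ n))
    (hQ0 : maxNorm (Q 0) ≤ Cmax / (1 - β)) :
    ∃ M : ℝ, M = (Cmax / (1 - β)) * (1 + β * |θ 0|) *
        (∏' i : ℕ, (1 + α (i + 1) * β ^ 2 * |θ (i + 1)|)) ∧
      ∀ n : ℕ, maxNorm (Q n) ≤ M := by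
  set D := Cmax / (1 - β)
  set g : ℕ → ℝ := fun i => α (i + 1) * β ^ 2 * |θ (i + 1)|
  have hg0 : ∀ i, 0 ≤ g i := fun i => by have := hα0 (i + 1); positivity
  have hg : Summable g :=
    (((summable_nat_add_iff 1).2 hsum).mul_left (β ^ 2)).congr fun i => by ring
  have hD0 : 0 ≤ D := div_nonneg hC (sub_nonneg.2 hβ1.le)
  have hθ0 : 0 ≤ β * |θ 0| := by positivity
  have hbound : ∀ n, maxNorm (Q (n + 1)) ≤ D * (1 + β * |θ 0|) * ∏ i ∈ range n, (1 + g i) := by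
    intro n
    induction n with
    | zero =>
      simpa [hupd] using
        maxNorm_tsqlUpdate_le_of_le_div hβ0 hβ1 (hc' 0) (hc'' 0) (hα0 0) (hα1 0) hQ0
    | succ n ih =>
      rw [hupd, prod_range_succ, ← mul_assoc]
      refine maxNorm_tsqlUpdate_le_mul hβ0 (hc' _) (hc'' _) (hα0 _) (hα1 _) ih ?_
      have hCD : (1 - β) * D = Cmax := mul_div_cancel₀ Cmax (sub_pos.2 hβ1).ne'
      calc (1 + β * |θ (n + 1)|) * Cmax ≤ (1 + β * |θ 0|) * Cmax := by
            have := hθmono (Nat.zero_le (n + 1))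
            gcongr
        _ ≤ (1 + β * |θ 0|) * Cmax * ∏ i ∈ range n, (1 + g i) :=
            le_mul_of_one_le_right (by positivity)
              (one_le_prod fun i _ => le_add_of_nonneg_right (hg0 i))
        _ = (1 - β) * (D * (1 + β * |θ 0|) * ∏ i ∈ range n, (1 + g i)) := by rw [← hCD]; ring
  have hP := Real.prod_range_one_add_le_tprod hg0 hg
  refine ⟨_, rfl, fun n => ?_⟩
  rcases n with _ | n
  · have hP1 : 1 ≤ ∏' i, (1 + g i) := by simpa using hP 0
    calc maxNorm (Q 0) ≤ D * 1 * 1 := by simpa using hQ0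
      _ ≤ _ := by gcongr; linarith
  · exact (hbound n).trans (mul_le_mul_of_nonneg_left (hP n) (by positivity))

/-- Under `‖Q₀‖ ≤ C_max/(1−β)`, `|θₙ| ≤ 1`, `|θₙ| ↓ 0`, and `∑ₙ αₙ|θₙ| < ∞`, the TSQL
iterates are uniformly bounded by
`M = (C_max/(1−β))(1 + β|θ₀|) ∏_{i=1}^∞ (1 + αᵢ β² |θᵢ|)`. -/
theorem tsql_iterates_uniformly_bounded [Fintype S] [Fintype A] [Nonempty S] [Nonempty A]
    [DecidableEq S] [DecidableEq A]
    (β Cmax : ℝ) (hβ0 : 0 ≤ β) (hβ1 : β < 1) (hC : 0 ≤ Cmax)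
    (Q : ℕ → S × A → ℝ) (sa : ℕ → S × A) (j k : ℕ → S) (c' c'' α θ : ℕ → ℝ)
    (hc' : ∀ n, |c' n| ≤ Cmax) (hc'' : ∀ n, |c'' n| ≤ Cmax)
    (hα0 : ∀ n, 0 ≤ α n) (hα1 : ∀ n, α n ≤ 1)
    (hθ1 : ∀ n, |θ n| ≤ 1) (hθmono : Antitone fun n => |θ n|)
    (hθ0 : Tendsto (fun n => |θ n|) atTop (nhds 0))
    (hsum : Summable fun n => α n * |θ n|)
    (hupd : ∀ n, Q (n + 1) =
      tsqlUpdate β (Q n) (sa n) (j n) (k n) (c' n) (c'' n) (α n) (θ n))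
    (hQ0 : maxNorm (Q 0) ≤ Cmax / (1 - β)) :
    ∃ M : ℝ, M = (Cmax / (1 - β)) * (1 + β * |θ 0|) *
        (∏' i : ℕ, (1 + α (i + 1) * β ^ 2 * |θ (i + 1)|)) ∧
      ∀ n : ℕ, maxNorm (Q n) ≤ M :=
  tsql_iterates_uniformly_bounded_general β Cmax hβ0 hβ1 hC Q sa j k c' c'' α θ hc' hc'' hα0 hα1
    hθmono hsum hupd hQ0
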